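/- arXiv:2312.00523 — 6 statements merged into one kernel-verified Lean document; each statement's English description precedes it below -/
import Mathlib

section
/- Let A be an abelian group (written additively) with a second binary operation (a,b) ↦ ab satisfying the right distributive law (a+b)c = ac + bc, and suppose (A, ∘) is a group for a ∘ b := ab + a + b. Define an action of the opposite group (A,∘)^op on the abelian group (A,+) by q ⊳ a := aq + a. Then this is an action by group automorphisms of (A,+), and the identity map η : (A,∘)^op → (A,+) is a bijective 1-cocycle, i.e. η(q ∘op q') = η(q) + q ⊳ η(q') for all q, q'. -/
/-- A brace structure: abelian group (A,+) with a right-distributive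
multiplication `m` such that `a ∘ b := m a b + a + b` makes A a group
(with identity 0). Then `q ⊳ a := m a q + a` defines an action of the
opposite group `(A,∘)ᵒᵖ` on `(A,+)` by group automorphisms, and the
identity map is a bijective 1-cocycle. -/
theorem stmt_5 {A : Type*} [AddCommGroup A] (m : A → A → A)
    (hdist : ∀ a b c, m (a + b) c = m a c + m b c)
    -- (A,∘) is a group with a ∘ b := m a b + a + b :
    (hassoc : ∀ a b c,
      m (m a b + a + b) c + (m a b + a + b) + c
        = m a (m b c + b + c) + a + (m b c + b + c))
    (hid_left : ∀ a, m 0 a + 0 + a = a)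
    (hid_right : ∀ a, m a 0 + a + 0 = a)
    (hinv : ∀ a, ∃ b, (m a b + a + b = 0) ∧ (m b a + b + a = 0)) :
    -- ⊳ is an action of (A,∘)ᵒᵖ by automorphisms of (A,+):
    (∀ q a a', m (a + a') q + (a + a') = (m a q + a) + (m a' q + a')) ∧
    (∀ a, m a 0 + a = a) ∧
    (∀ q q' a, m a (m q' q + q' + q) + a = m (m a q' + a) q + (m a q' + a)) ∧
    (∀ q, Function.Bijective (fun a => m a q + a)) ∧
    -- the identity map η is a 1-cocycle: η(q ∘op q') = η(q) + q ⊳ η(q'):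
    (∀ q q' : A, m q' q + q' + q = q + (m q' q + q')) := by
  set mul : A → A → A := fun a b => m a b + a + b with hmul
  have hmm : ∀ a b c, mul (mul a b) c = mul a (mul b c) := by
    intro a b c
    simp only [hmul]
    exact hassoc a b c
  have hone : ∀ a, mul a 0 = a := fun a => hid_right a
  have hone' : ∀ a, mul 0 a = a := fun a => hid_left a
  refine ⟨?_, ?_, ?_, ?_, ?_⟩
  · intro q a a'
    rw [hdist]; abel
  · intro a
    have := hid_right a
    rwa [add_zero] at this
  · intro q q' a
    have h := hassoc a q' q
    rw [hdist] at h
    have h2 : m (m a q' + a) q + (m a q' + a) + (m q' q + q' + q)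
        = m a (m q' q + q' + q) + a + (m q' q + q' + q) := by
      rw [← h]; abel
    exact (add_right_cancel h2).symm
  · intro q
    obtain ⟨b, hb1, hb2⟩ := hinv q
    have hbq : mul b q = 0 := hb2
    have hqb : mul q b = 0 := hb1
    constructor
    · intro a a' h
      dsimp at h
      have h' : mul a q = mul a' q := congrArg (· + q) h
      calc a = mul a (mul q b) := by rw [hqb, hone]
        _ = mul (mul a q) b := (hmm a q b).symm
        _ = mul (mul a' q) b := by rw [h']
        _ = mul a' (mul q b) := hmm a' q b
        _ = a' := by rw [hqb, hone]
    · intro y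
      refine ⟨mul (y + q) b, ?_⟩
      have key : mul (mul (y + q) b) q = y + q := by
        rw [hmm, hbq, hone]
      have key' : m (mul (y + q) b) q + mul (y + q) b + q = y + q := key
      exact add_right_cancel key'
  · intro q q'
    abel
end

section
/- Let ψ(q₁,q₂,q₃) := e^{i⟨η(q₁⁻¹), β(q₂,q₃)⟩}, where η : Q → V̂ is a 1-cocycle for the dual action and β : Q × Q → V is a 2-cocycle. Then ψ is a 3-cocycle on Q with values in the circle group 𝕋, i.e. ψ(q₂,q₃,q₄) ψ(q₁,q₂q₃,q₄) ψ(q₁,q₂,q₃) = ψ(q₁q₂,q₃,q₄) ψ(q₁,q₂,q₃q₄) for all q₁,q₂,q₃,q₄ ∈ Q. -/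
theorem stmt_6 {Q V Vh : Type*} [Group Q] [AddCommGroup V] [AddCommGroup Vh]
    [DistribMulAction Q V] [DistribMulAction Q Vh]
    -- the pairing e^{i⟨·,·⟩} : V̂ × V → 𝕋, additive in each variable
    (pair : Vh → V → Circle)
    (hpair₁ : ∀ ξ ξ' v, pair (ξ + ξ') v = pair ξ v * pair ξ' v)
    (hpair₂ : ∀ ξ v v', pair ξ (v + v') = pair ξ v * pair ξ v')
    -- the action of Q on V̂ is the dual action: ⟨q♭ξ, v⟩ = ⟨ξ, q⁻¹v⟩
    (hdual : ∀ (q : Q) ξ v, pair (q • ξ) v = pair ξ (q⁻¹ • v))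
    (η : Q → Vh) (hη : ∀ q₁ q₂, η (q₁ * q₂) = η q₁ + q₁ • η q₂)
    (β : Q → Q → V)
    (hβ : ∀ q₁ q₂ q₃, β q₁ q₂ + β (q₁ * q₂) q₃ = q₁ • β q₂ q₃ + β q₁ (q₂ * q₃)) :
    let ψ : Q → Q → Q → Circle := fun q₁ q₂ q₃ => pair (η q₁⁻¹) (β q₂ q₃)
    ∀ q₁ q₂ q₃ q₄,
      ψ q₂ q₃ q₄ * ψ q₁ (q₂ * q₃) q₄ * ψ q₁ q₂ q₃
        = ψ (q₁ * q₂) q₃ q₄ * ψ q₁ q₂ (q₃ * q₄) := by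
  intro ψ q₁ q₂ q₃ q₄
  show pair (η q₂⁻¹) (β q₃ q₄) * pair (η q₁⁻¹) (β (q₂ * q₃) q₄) * pair (η q₁⁻¹) (β q₂ q₃)
      = pair (η (q₁ * q₂)⁻¹) (β q₃ q₄) * pair (η q₁⁻¹) (β q₂ (q₃ * q₄))
  have key : pair (η q₁⁻¹) (β (q₂ * q₃) q₄) * pair (η q₁⁻¹) (β q₂ q₃)
      = pair (η q₁⁻¹) (q₂ • β q₃ q₄) * pair (η q₁⁻¹) (β q₂ (q₃ * q₄)) := by
    rw [← hpair₂, ← hpair₂, add_comm, hβ]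
  rw [mul_inv_rev, hη, hpair₁, hdual, inv_inv, mul_assoc, key, mul_assoc]
end

section
/- With ψ(q₁,q₂,q₃) := e^{i⟨η(q₁⁻¹), β(q₂,q₃)⟩}: if η = ∂ξ₀ is a coboundary, i.e. η(q) = q♭ξ₀ − ξ₀ for some ξ₀ ∈ V̂, then ψ = ∂b for b(q₁,q₂) := e^{−i⟨ξ₀, β(q₁,q₂)⟩}, i.e. ψ(q₁,q₂,q₃) = b(q₂,q₃) b(q₁,q₂q₃) b(q₁q₂,q₃)⁻¹ b(q₁,q₂)⁻¹ for all q₁,q₂,q₃ ∈ Q. -/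
theorem stmt_8 {Q V Vh : Type*} [Group Q] [AddCommGroup V] [AddCommGroup Vh]
    [DistribMulAction Q V] [DistribMulAction Q Vh]
    (pair : Vh → V → Circle)
    (hpair₁ : ∀ ξ ξ' v, pair (ξ + ξ') v = pair ξ v * pair ξ' v)
    (hpair₂ : ∀ ξ v v', pair ξ (v + v') = pair ξ v * pair ξ v')
    (hdual : ∀ (q : Q) ξ v, pair (q • ξ) v = pair ξ (q⁻¹ • v))
    (β : Q → Q → V)
    (hβ : ∀ q₁ q₂ q₃, β q₁ q₂ + β (q₁ * q₂) q₃ = q₁ • β q₂ q₃ + β q₁ (q₂ * q₃))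
    (ξ₀ : Vh) (η : Q → Vh)
    -- η = ∂ξ₀ is a coboundary:
    (hη : ∀ q, η q = q • ξ₀ - ξ₀) :
    let ψ : Q → Q → Q → Circle := fun q₁ q₂ q₃ => pair (η q₁⁻¹) (β q₂ q₃)
    let b : Q → Q → Circle := fun q₁ q₂ => (pair ξ₀ (β q₁ q₂))⁻¹
    ∀ q₁ q₂ q₃,
      ψ q₁ q₂ q₃ = b q₂ q₃ * b q₁ (q₂ * q₃) * (b (q₁ * q₂) q₃)⁻¹ * (b q₁ q₂)⁻¹ := by
  intro ψ b q₁ q₂ q₃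
  have h0 : ∀ v, pair 0 v = 1 := by
    intro v
    have := hpair₁ 0 0 v
    simp at this
    exact this
  have hneg : ∀ ξ v, pair (-ξ) v = (pair ξ v)⁻¹ := by
    intro ξ v
    have := hpair₁ ξ (-ξ) v
    simp [h0] at this
    exact eq_inv_of_mul_eq_one_left (by rw [mul_comm]; exact this.symm)
  -- key : pair ξ₀ applied to the cocycle identity
  have key : pair ξ₀ (β q₁ q₂) * pair ξ₀ (β (q₁ * q₂) q₃)
      = pair ξ₀ (q₁ • β q₂ q₃) * pair ξ₀ (β q₁ (q₂ * q₃)) := by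
    rw [← hpair₂, ← hpair₂, hβ]
  have hdl : pair (q₁⁻¹ • ξ₀) (β q₂ q₃) = pair ξ₀ (q₁ • β q₂ q₃) := by
    rw [hdual]; simp
  have hf : pair ξ₀ (q₁ • β q₂ q₃)
      = (pair ξ₀ (β q₁ (q₂ * q₃)))⁻¹ * (pair ξ₀ (β (q₁ * q₂) q₃) * pair ξ₀ (β q₁ q₂)) := by
    rw [eq_inv_mul_iff_mul_eq, mul_comm, ← key, mul_comm]
  show pair (η q₁⁻¹) (β q₂ q₃) = _
  rw [hη, sub_eq_add_neg, hpair₁, hneg, hdl, hf]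
  simp only [b, inv_inv]
  simp [mul_comm, mul_assoc, mul_left_comm]
end

section
/- Let G be the extension of V by Q determined by a 2-cocycle β, realized on Q × V with multiplication (q₁,v₁)(q₂,v₂) = (q₁q₂, v₁ + q₁v₂ + β(q₁,q₂)). Define ω_η(g₁,g₂) := e^{i⟨η(q₁⁻¹), v₂⟩} for gᵢ = (qᵢ,vᵢ), where η : Q → V̂ is a 1-cocycle. Then the coboundary-type defect of ω_η equals the inflation of ψ: ω_η(g₂,g₃) ω_η(g₁,g₂g₃) ω_η(g₁,g₂)⁻¹ ω_η(g₁g₂,g₃)⁻¹ = e^{i⟨η(q₁⁻¹), β(q₂,q₃)⟩} for all g₁,g₂,g₃ ∈ G. In particular, if β = 0 then ω_η is a 2-cocycle on G. -/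
theorem stmt_9 {Q V Vh : Type*} [Group Q] [AddCommGroup V] [AddCommGroup Vh]
    [DistribMulAction Q V] [DistribMulAction Q Vh]
    (pair : Vh → V → Circle)
    (hpair₁ : ∀ ξ ξ' v, pair (ξ + ξ') v = pair ξ v * pair ξ' v)
    (hpair₂ : ∀ ξ v v', pair ξ (v + v') = pair ξ v * pair ξ v')
    (hdual : ∀ (q : Q) ξ v, pair (q • ξ) v = pair ξ (q⁻¹ • v))
    (η : Q → Vh) (hη : ∀ q₁ q₂, η (q₁ * q₂) = η q₁ + q₁ • η q₂)
    (β : Q → Q → V)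
    (hβ : ∀ q₁ q₂ q₃, β q₁ q₂ + β (q₁ * q₂) q₃ = q₁ • β q₂ q₃ + β q₁ (q₂ * q₃))
    (hnorm : ∀ q, β 1 q = 0 ∧ β q 1 = 0) :
    -- G = Q × V with the extension multiplication, ω_η(g₁,g₂) = e^{i⟨η(q₁⁻¹),v₂⟩}
    let mul : Q × V → Q × V → Q × V :=
      fun g h => (g.1 * h.1, g.2 + g.1 • h.2 + β g.1 h.1)
    let ω : Q × V → Q × V → Circle := fun g₁ g₂ => pair (η g₁.1⁻¹) g₂.2
    (∀ g₁ g₂ g₃ : Q × V,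
      ω g₂ g₃ * ω g₁ (mul g₂ g₃) * (ω g₁ g₂)⁻¹ * (ω (mul g₁ g₂) g₃)⁻¹
        = pair (η g₁.1⁻¹) (β g₂.1 g₃.1)) ∧
    ((∀ q₁ q₂, β q₁ q₂ = 0) →
      ∀ g₁ g₂ g₃ : Q × V,
        ω g₂ g₃ * ω g₁ (mul g₂ g₃) = ω g₁ g₂ * ω (mul g₁ g₂) g₃) := by
  intro mul ω
  have key : ∀ g₁ g₂ g₃ : Q × V,
      ω g₂ g₃ * ω g₁ (mul g₂ g₃) * (ω g₁ g₂)⁻¹ * (ω (mul g₁ g₂) g₃)⁻¹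
        = pair (η g₁.1⁻¹) (β g₂.1 g₃.1) := by
    intro g₁ g₂ g₃
    simp only [ω, mul]
    rw [mul_inv_rev, hη, hpair₁, hdual, inv_inv, hpair₂, hpair₂]
    generalize pair (η g₁.1⁻¹) g₂.2 = a
    generalize pair (η g₁.1⁻¹) (β g₂.1 g₃.1) = b
    generalize pair (η g₁.1⁻¹) (g₂.1 • g₃.2) = c
    generalize pair (η g₂.1⁻¹) g₃.2 = d
    group
    ext
    push_cast
    field_simp
  refine ⟨key, fun hβ0 g₁ g₂ g₃ => ?_⟩
  have := key g₁ g₂ g₃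
  rw [hβ0] at this
  have h1 : pair (η g₁.1⁻¹) (0 : V) = 1 := by
    have := hpair₂ (η g₁.1⁻¹) 0 0
    simpa using this.symm
  rw [h1] at this
  rw [← mul_inv_eq_one, mul_inv, ← mul_assoc]
  exact this
end

section
/- Define π(q,v) on functions φ : Q → ℂ by (π(q,v)φ)(q₀) := e^{−i⟨η(q₀),v⟩} b(q₀⁻¹,q) φ(q⁻¹q₀), where G is the extension of V by Q with cocycle β, η : Q → V̂ is a 1-cocycle and ∂b = ψ with ψ(q₁,q₂,q₃) = e^{i⟨η(q₁⁻¹),β(q₂,q₃)⟩}. Then π is a projective representation with cocycle ω(g₁,g₂) = e^{−i⟨η(q₁⁻¹),v₂⟩} b(q₁,q₂): for all g₁ = (q₁,v₁), g₂ = (q₂,v₂) in G and all φ, π(g₁)(π(g₂)φ) = ω(g₁,g₂) · π(g₁g₂)φ. -/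
theorem stmt_12 {Q V Vh : Type*} [Group Q] [AddCommGroup V] [AddCommGroup Vh]
    [DistribMulAction Q V] [DistribMulAction Q Vh]
    (pair : Vh → V → Circle)
    (hpair₁ : ∀ ξ ξ' v, pair (ξ + ξ') v = pair ξ v * pair ξ' v)
    (hpair₂ : ∀ ξ v v', pair ξ (v + v') = pair ξ v * pair ξ v')
    (hdual : ∀ (q : Q) ξ v, pair (q • ξ) v = pair ξ (q⁻¹ • v))
    (η : Q → Vh) (hη : ∀ q₁ q₂, η (q₁ * q₂) = η q₁ + q₁ • η q₂)
    (β : Q → Q → V)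
    (hβ : ∀ q₁ q₂ q₃, β q₁ q₂ + β (q₁ * q₂) q₃ = q₁ • β q₂ q₃ + β q₁ (q₂ * q₃))
    (b : Q → Q → Circle)
    -- ∂b = ψ, where ψ(q₁,q₂,q₃) = e^{i⟨η(q₁⁻¹),β(q₂,q₃)⟩}
    (hb : ∀ q₁ q₂ q₃,
      pair (η q₁⁻¹) (β q₂ q₃)
        = b q₂ q₃ * b q₁ (q₂ * q₃) * (b (q₁ * q₂) q₃)⁻¹ * (b q₁ q₂)⁻¹) :
    -- G = Q × V with the extension multiplication
    let mul : Q × V → Q × V → Q × V :=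
      fun g h => (g.1 * h.1, g.2 + g.1 • h.2 + β g.1 h.1)
    -- (π(q,v)φ)(q₀) = e^{-i⟨η(q₀),v⟩} b(q₀⁻¹,q) φ(q⁻¹q₀)
    let π : Q × V → (Q → ℂ) → (Q → ℂ) :=
      fun g φ q₀ => ((pair (η q₀) g.2)⁻¹ * b q₀⁻¹ g.1 : Circle) * φ (g.1⁻¹ * q₀)
    -- ω(g₁,g₂) = e^{-i⟨η(q₁⁻¹),v₂⟩} b(q₁,q₂)
    let ω : Q × V → Q × V → Circle :=
      fun g₁ g₂ => (pair (η g₁.1⁻¹) g₂.2)⁻¹ * b g₁.1 g₂.1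
    ∀ (g₁ g₂ : Q × V) (φ : Q → ℂ) (q₀ : Q),
      π g₁ (π g₂ φ) q₀ = (ω g₁ g₂ : Circle) * π (mul g₁ g₂) φ q₀ := by
  intro mul π ω g₁ g₂ φ q₀
  obtain ⟨q₁, v₁⟩ := g₁
  obtain ⟨q₂, v₂⟩ := g₂
  simp only [π, ω, mul]
  have hφ : q₂⁻¹ * (q₁⁻¹ * q₀) = (q₁ * q₂)⁻¹ * q₀ := by group
  have h1 : pair (η (q₁⁻¹ * q₀)) v₂ = pair (η q₁⁻¹) v₂ * pair (η q₀) (q₁ • v₂) := by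
    rw [hη, hpair₁, hdual, inv_inv]
  have h2 : pair (η q₀) (v₁ + q₁ • v₂ + β q₁ q₂)
      = pair (η q₀) v₁ * pair (η q₀) (q₁ • v₂) * pair (η q₀) (β q₁ q₂) := by
    rw [hpair₂, hpair₂]
  have h3 := hb q₀⁻¹ q₁ q₂
  rw [inv_inv] at h3
  have h4 : (q₁⁻¹ * q₀)⁻¹ = q₀⁻¹ * q₁ := by group
  rw [hφ, h1, h2, h4, h3]
  push_cast
  have n1 : (pair (η q₀) v₁ : ℂ) ≠ 0 := Circle.coe_ne_zero _
  have n2 : (pair (η q₀) (q₁ • v₂) : ℂ) ≠ 0 := Circle.coe_ne_zero _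
  have n3 : (pair (η q₁⁻¹) v₂ : ℂ) ≠ 0 := Circle.coe_ne_zero _
  have n4 : (b (q₀⁻¹ * q₁) q₂ : ℂ) ≠ 0 := Circle.coe_ne_zero _
  have n5 : (b q₀⁻¹ q₁ : ℂ) ≠ 0 := Circle.coe_ne_zero _
  have n6 : (b q₁ q₂ : ℂ) ≠ 0 := Circle.coe_ne_zero _
  have n7 : (b q₀⁻¹ (q₁ * q₂) : ℂ) ≠ 0 := Circle.coe_ne_zero _
  field_simp
end

section
/- Let Q act on V̂, η : Q → V̂ a bijective 1-cocycle, and let v : (Q × V̂)² → (Q × V̂)² be defined by v(q₁,ξ₁;q₂,ξ₂) := (q₂q₁, q₂♭ξ₁; η⁻¹(η(q₂⁻¹)+ξ₁)⁻¹ η⁻¹(ξ₁), (η⁻¹(η(q₂⁻¹)+ξ₁)⁻¹)♭(q₂⁻¹♭ξ₂ − ξ₁)). Then v is a bijection with inverse v⁻¹(q₁,ξ₁;q₂,ξ₂) = (η⁻¹(η⁻¹(ξ₁)♭η(q₂))⁻¹ q₁, (η⁻¹(η⁻¹(ξ₁)♭η(q₂))⁻¹)♭ξ₁; η⁻¹(η⁻¹(ξ₁)♭η(q₂)),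 ξ₁ + η⁻¹(ξ₁)♭ξ₂). -/
theorem stmt_19 {Q Vh : Type*} [Group Q] [AddCommGroup Vh] [DistribMulAction Q Vh]
    (η : Q → Vh) (ηinv : Vh → Q)
    (hη : ∀ q₁ q₂, η (q₁ * q₂) = η q₁ + q₁ • η q₂)
    (hli : ∀ q, ηinv (η q) = q) (hri : ∀ ξ, η (ηinv ξ) = ξ) :
    let v : (Q × Vh) × (Q × Vh) → (Q × Vh) × (Q × Vh) := fun p =>
      ((p.2.1 * p.1.1, p.2.1 • p.1.2),
       ((ηinv (η p.2.1⁻¹ + p.1.2))⁻¹ * ηinv p.1.2,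
        (ηinv (η p.2.1⁻¹ + p.1.2))⁻¹ • (p.2.1⁻¹ • p.2.2 - p.1.2)))
    let vinv : (Q × Vh) × (Q × Vh) → (Q × Vh) × (Q × Vh) := fun p =>
      (((ηinv (ηinv p.1.2 • η p.2.1))⁻¹ * p.1.1,
        (ηinv (ηinv p.1.2 • η p.2.1))⁻¹ • p.1.2),
       (ηinv (ηinv p.1.2 • η p.2.1),
        p.1.2 + ηinv p.1.2 • p.2.2))
    Function.Bijective v ∧
    (∀ p, vinv (v p) = p) ∧ (∀ p, v (vinv p) = p) := by
  intro v vinv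
  have hη1 : η 1 = 0 := by
    have h := hη 1 1
    simp only [one_mul, one_smul] at h
    exact (left_eq_add.mp h)
  have hinv : ∀ q : Q, η q⁻¹ = -(q⁻¹ • η q) := by
    intro q
    have h := hη q⁻¹ q
    rw [inv_mul_cancel, hη1] at h
    exact eq_neg_of_add_eq_zero_left h.symm
  have hkey : ∀ (q : Q) (ξ : Vh), ηinv (η q + q • ξ) = q * ηinv ξ := by
    intro q ξ
    have h : η q + q • ξ = η (q * ηinv ξ) := by rw [hη, hri]
    rw [h, hli]
  have hL : ∀ p, vinv (v p) = p := by
    rintro ⟨⟨q₁, ξ₁⟩, ⟨q₂, ξ₂⟩⟩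
    simp only [v, vinv]
    set s := ηinv (η q₂⁻¹ + ξ₁) with hs
    -- ηinv (q₂ • ξ₁) = q₂ * s
    have hα : ηinv (q₂ • ξ₁) = q₂ * s := by
      have h1 : η q₂⁻¹ + ξ₁ = η q₂⁻¹ + q₂⁻¹ • (q₂ • ξ₁) := by rw [inv_smul_smul]
      rw [hs, h1, hkey, mul_inv_cancel_left]
    -- η of the third component
    have hb : η (s⁻¹ * ηinv ξ₁) = (s⁻¹ * q₂⁻¹) • η q₂ := by
      rw [hη, hri, hinv s, hs, hri, ← hs, hinv q₂, mul_smul]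
      rw [smul_add, smul_neg]
      abel
    -- the key: ηinv (ηinv (q₂•ξ₁) • η (s⁻¹ * ηinv ξ₁)) = q₂
    have hc : ηinv (ηinv (q₂ • ξ₁) • η (s⁻¹ * ηinv ξ₁)) = q₂ := by
      rw [hα, hb, smul_smul]
      have : q₂ * s * (s⁻¹ * q₂⁻¹) = 1 := by group
      rw [this, one_smul, hli]
    simp only [Prod.mk.injEq]
    refine ⟨⟨?_, ?_⟩, hc, ?_⟩
    · rw [hc]; group
    · rw [hc, inv_smul_smul]
    · rw [hα, smul_smul, mul_inv_cancel_right, smul_sub, smul_inv_smul]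
      abel
  have hR : ∀ p, v (vinv p) = p := by
    rintro ⟨⟨q₁, ξ₁⟩, ⟨q₂, ξ₂⟩⟩
    simp only [v, vinv]
    set t := ηinv (ηinv ξ₁ • η q₂) with ht
    set r := ηinv ξ₁ with hr
    have hηt : η t = r • η q₂ := by rw [ht, hri]
    -- ηinv (ξ₁ + r • η q₂) = r * q₂
    have h1 : ηinv (ξ₁ + r • η q₂) = r * q₂ := by
      have : ξ₁ = η r := by rw [hr, hri]
      rw [this, hkey, hli]
    -- s' = ηinv (η t⁻¹ + t⁻¹ • ξ₁) = t⁻¹ * r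
    have hs' : ηinv (η t⁻¹ + t⁻¹ • ξ₁) = t⁻¹ * r := by
      rw [hkey, hr]
    -- ηinv (t⁻¹ • ξ₁) = t⁻¹ * (r * q₂)
    have h2 : ηinv (t⁻¹ • ξ₁) = t⁻¹ * (r * q₂) := by
      have h3 : t⁻¹ • ξ₁ = η t⁻¹ + t⁻¹ • (ξ₁ + r • η q₂) := by
        rw [hinv t, hηt, smul_add]
        abel
      rw [h3, hkey, h1]
    simp only [Prod.mk.injEq]
    refine ⟨⟨?_, ?_⟩, ?_, ?_⟩
    · group
    · rw [smul_inv_smul]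
    · rw [hs', h2]
      group
    · rw [hs', smul_add, add_sub_cancel_left, smul_smul, smul_smul]
      have e1 : (t⁻¹ * r)⁻¹ * t⁻¹ * r = 1 := by group
      rw [e1, one_smul]
  refine ⟨⟨Function.LeftInverse.injective hL, Function.RightInverse.surjective hR⟩, hL, hR⟩
end
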